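/- Every real number x with 0 ≤ x ≤ 1 can be written as x = a + b/2 for some elements a and b of the ternary Cantor set C. -/
import Mathlib

lemma preCantorSet_succ_subset (n : ℕ) : preCantorSet (n + 1) ⊆ preCantorSet n := by
  induction n with
  | zero =>
    rintro x (⟨t, ht, rfl⟩ | ⟨t, ht, rfl⟩) <;>
      simp only [preCantorSet_zero, Set.mem_Icc] at * <;>
      constructor <;> linarith [ht.1, ht.2]
  | succ n ih =>
    rintro x (⟨t, ht, rfl⟩ | ⟨t, ht, rfl⟩)
    · exact Or.inl ⟨t, ih ht, rfl⟩
    · exact Or.inr ⟨t, ih ht, rfl⟩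

lemma preCantorSet_subset_Icc (n : ℕ) : preCantorSet n ⊆ Set.Icc 0 1 := by
  induction n with
  | zero => exact fun x hx => hx
  | succ n ih => exact (preCantorSet_succ_subset n).trans ih

lemma exists_pre (n : ℕ) : ∀ x : ℝ, 0 ≤ x → x ≤ 3/2 →
    ∃ a ∈ preCantorSet n, ∃ b ∈ preCantorSet n, x = a + b / 2 := by
  induction n with
  | zero =>
    intro x hx0 hx1
    by_cases h : x ≤ 1
    · exact ⟨x, Set.mem_Icc.mpr ⟨hx0, h⟩, 0, Set.mem_Icc.mpr ⟨le_refl 0, zero_le_one⟩, by ring⟩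
    · refine ⟨1, Set.mem_Icc.mpr ⟨zero_le_one, le_refl 1⟩, 2*(x-1),
        Set.mem_Icc.mpr ⟨by linarith, by linarith⟩, by ring⟩
  | succ n ih =>
    intro x hx0 hx1
    by_cases h1 : x ≤ 1/2
    · obtain ⟨a, ha, b, hb, hab⟩ := ih (3*x) (by linarith) (by linarith)
      exact ⟨a/3, Or.inl ⟨a, ha, rfl⟩, b/3, Or.inl ⟨b, hb, rfl⟩, by
        field_simp at hab ⊢; linarith⟩
    · by_cases h2 : x ≤ 5/6
      · obtain ⟨a, ha, b, hb, hab⟩ := ih (3*x - 1) (by linarith) (by linarith)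
        exact ⟨a/3, Or.inl ⟨a, ha, rfl⟩, (2+b)/3, Or.inr ⟨b, hb, rfl⟩, by
          field_simp at hab ⊢; linarith⟩
      · by_cases h3 : x ≤ 7/6
        · obtain ⟨a, ha, b, hb, hab⟩ := ih (3*x - 2) (by linarith) (by linarith)
          exact ⟨(2+a)/3, Or.inr ⟨a, ha, rfl⟩, b/3, Or.inl ⟨b, hb, rfl⟩, by
            field_simp at hab ⊢; linarith⟩
        · obtain ⟨a, ha, b, hb, hab⟩ := ih (3*x - 3) (by linarith) (by linarith)
          exact ⟨(2+a)/3, Or.inr ⟨a, ha, rfl⟩, (2+b)/3, Or.inr ⟨b, hb, rfl⟩, by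
            field_simp at hab ⊢; linarith⟩

theorem stmt_7 (x : ℝ) (hx0 : 0 ≤ x) (hx1 : x ≤ 1) :
    ∃ a ∈ cantorSet, ∃ b ∈ cantorSet, x = a + b / 2 := by
  set K : ℕ → Set (ℝ × ℝ) := fun n =>
    {p | p.1 ∈ preCantorSet n ∧ p.2 ∈ preCantorSet n ∧ x = p.1 + p.2 / 2} with hK
  have hclosed : ∀ n, IsClosed (K n) := by
    intro n
    apply IsClosed.inter (IsClosed.preimage continuous_fst (isClosed_preCantorSet n))
    apply IsClosed.inter (IsClosed.preimage continuous_snd (isClosed_preCantorSet n))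
    exact isClosed_eq continuous_const (by fun_prop)
  have hsub : ∀ n, K (n+1) ⊆ K n := fun n p hp =>
    ⟨preCantorSet_succ_subset n hp.1, preCantorSet_succ_subset n hp.2.1, hp.2.2⟩
  have hne : ∀ n, (K n).Nonempty := by
    intro n
    obtain ⟨a, ha, b, hb, hab⟩ := exists_pre n x hx0 (by linarith)
    exact ⟨(a, b), ha, hb, hab⟩
  have hcpt : IsCompact (K 0) := by
    have : K 0 ⊆ Set.Icc 0 1 ×ˢ Set.Icc 0 1 := fun p hp =>
      ⟨preCantorSet_subset_Icc 0 hp.1, preCantorSet_subset_Icc 0 hp.2.1⟩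
    exact (isCompact_Icc.prod isCompact_Icc).of_isClosed_subset (hclosed 0) this
  obtain ⟨p, hp⟩ := IsCompact.nonempty_iInter_of_sequence_nonempty_isCompact_isClosed
    K hsub hne hcpt hclosed
  simp only [Set.mem_iInter] at hp
  refine ⟨p.1, Set.mem_iInter.mpr fun n => (hp n).1, p.2,
    Set.mem_iInter.mpr fun n => (hp n).2.1, (hp 0).2.2⟩
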